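/- Let V be a pseudovariety of semigroups containing Sl and satisfying N ⓜ V = V, let S be a member of V, and let {e} be a one-element semigroup. Then the natural mapping ι : S * {e} → S ∐^V {e} from the free product to the V-coproduct is injective. -/

import Mathlib

set_option autoImplicit false

/-! ### General notions: topological semigroups, pseudovarieties, pro-V semigroups -/

/-- Continuity of a map into a type regarded with the discrete topology. -/
def ContinuousDisc {S : Type} [TopologicalSpace S] {T : Type} (f : S → T) : Prop :=
  @Continuous S T _ ⊥ f

/-- A pseudovariety of semigroups: a class of finite semigroups closed under
homomorphic images, subsemigroups and finite direct products. -/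
structure Pseudovariety : Type 1 where
  Mem : ∀ (S : Type) [Semigroup S], Prop
  finite : ∀ (S : Type) [Semigroup S], Mem S → Finite S
  closed_hom : ∀ (S T : Type) [Semigroup S] [Semigroup T] (f : S →ₙ* T),
    Mem S → Function.Surjective f → Mem T
  closed_sub : ∀ (S T : Type) [Semigroup S] [Semigroup T] (f : T →ₙ* S),
    Mem S → Function.Injective f → Mem T
  closed_prod : ∀ (ι : Type) [Finite ι] (S : ι → Type) [∀ i, Semigroup (S i)],
    (∀ i, Mem (S i)) → Mem (∀ i, S i)

/-- A bundled member of a pseudovariety `V` (a finite semigroup belonging to `V`),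
always regarded as carrying the discrete topology. -/
structure SgrIn (V : Pseudovariety) : Type 1 where
  carrier : Type
  [str : Semigroup carrier]
  mem : V.Mem carrier

attribute [instance] SgrIn.str

/-- A (bundled) topological semigroup. -/
structure TopSgr : Type 1 where
  carrier : Type
  [str : Semigroup carrier]
  [top : TopologicalSpace carrier]

attribute [instance] TopSgr.str TopSgr.top

/-- A finite semigroup regarded as a topological semigroup with the discrete topology. -/
def discTopSgr (S : Type) [Semigroup S] : TopSgr :=
  @TopSgr.mk S _ ⊥

/-- A pro-V semigroup: a compact Hausdorff topological semigroup that is residually `V`. -/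
def IsProV (V : Pseudovariety) (S : TopSgr) : Prop :=
  CompactSpace S.carrier ∧ T2Space S.carrier ∧ ContinuousMul S.carrier ∧
    ∀ x y : S.carrier, x ≠ y → ∃ (F : SgrIn V) (f : S.carrier →ₙ* F.carrier),
      ContinuousDisc ⇑f ∧ f x ≠ f y

/-- A profinite semigroup: a compact Hausdorff totally disconnected topological semigroup. -/
def IsProfiniteSgr (S : TopSgr) : Prop :=
  CompactSpace S.carrier ∧ T2Space S.carrier ∧ TotallyDisconnectedSpace S.carrier ∧
    ContinuousMul S.carrier

/-- `C`, together with the continuous homomorphisms `φ i`, is a `V`-coproduct of the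
family `S` of pro-`V` semigroups. -/
structure IsCoproduct (V : Pseudovariety) {I : Type} (S : I → TopSgr)
    (C : TopSgr) (φ : ∀ i, (S i).carrier →ₙ* C.carrier) : Prop where
  proV : IsProV V C
  cont : ∀ i, Continuous ⇑(φ i)
  universal : ∀ (T : TopSgr), IsProV V T →
    ∀ ψ : ∀ i, (S i).carrier →ₙ* T.carrier, (∀ i, Continuous ⇑(ψ i)) →
      ∃! Ψ : C.carrier →ₙ* T.carrier, Continuous ⇑Ψ ∧ ∀ i, Ψ.comp (φ i) = ψ i

/-- `P`, together with the homomorphisms `e i`, is a free product (coproduct in the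
category of semigroups) of the family `S`. -/
structure IsFreeProduct {I : Type} (S : I → Type) [∀ i, Semigroup (S i)]
    (P : Type) [Semigroup P] (e : ∀ i, S i →ₙ* P) : Prop where
  universal : ∀ (T : Type) [Semigroup T] (f : ∀ i, S i →ₙ* T),
    ∃! F : P →ₙ* T, ∀ i, F.comp (e i) = f i

/-! ### Particular pseudovarieties and related notions -/

/-- `V` contains the pseudovariety `Sl` of finite semilattices. -/
def ContainsSl (V : Pseudovariety) : Prop :=
  ∀ (S : Type) [Semigroup S] [Finite S],
    (∀ x y : S, x * y = y * x) → (∀ x : S, x * x = x) → V.Mem S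

/-- Green's `J`-preorder: `s ≤_J t`, i.e. `s ∈ S^I t S^I`. -/
def JBelow {S : Type} [Semigroup S] (s t : S) : Prop :=
  ∃ x y : WithOne S, x * (t : WithOne S) * y = (s : WithOne S)

/-- `V` contains the pseudovariety `J` of finite `J`-trivial semigroups. -/
def ContainsJ (V : Pseudovariety) : Prop :=
  ∀ (S : Type) [Semigroup S] [Finite S],
    (∀ s t : S, JBelow s t → JBelow t s → s = t) → V.Mem S

/-- The preimage of an idempotent under a semigroup homomorphism, as a subsemigroup. -/
def fiberSub {S T : Type} [Semigroup S] [Semigroup T] (ψ : S →ₙ* T) (e : T)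
    (he : e * e = e) : Subsemigroup S where
  carrier := ⇑ψ ⁻¹' {e}
  mul_mem' := by
    intro a b ha hb
    simp only [Set.mem_preimage, Set.mem_singleton_iff] at *
    rw [map_mul, ha, hb, he]

/-- The set of products of `n+1` elements of a semigroup (so `nthProds S 0 = S`). -/
def nthProds (S : Type) [Semigroup S] : ℕ → Set S
  | 0 => Set.univ
  | n + 1 => {x | ∃ a y, y ∈ nthProds S n ∧ x = a * y}

/-- A nilpotent semigroup: it has a zero `z` and some power of the semigroup is `{z}`. -/
def IsNilpotentSgr (S : Type) [Semigroup S] : Prop :=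
  ∃ z : S, (∀ x : S, z * x = z ∧ x * z = z) ∧ ∃ n : ℕ, nthProds S n ⊆ {z}

/-- A generator of the Mal'cev product `N ⓜ V`: a finite semigroup admitting a surjective
homomorphism onto a member of `V` all of whose idempotent fibers are nilpotent. -/
def NMalcevGen (V : Pseudovariety) (S : Type) [Semigroup S] : Prop :=
  Finite S ∧ ∃ (T : SgrIn V) (ψ : S →ₙ* T.carrier), Function.Surjective ψ ∧
    ∀ (e : T.carrier) (he : e * e = e), IsNilpotentSgr (fiberSub ψ e he)

/-- The equality `N ⓜ V = V`: `V` coincides with the smallest pseudovariety containing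
all finite semigroups admitting an `N`-morphism onto some member of `V`. -/
def NMalcevFixed (V : Pseudovariety) : Prop :=
  ∀ (S : Type) [Semigroup S] [Finite S],
    V.Mem S ↔ ∀ U : Pseudovariety,
      (∀ (S' : Type) [Semigroup S'], NMalcevGen V S' → U.Mem S') → U.Mem S

/-- A completely simple semigroup: simple with a primitive idempotent. -/
def IsCompletelySimple (S : Type) [Semigroup S] : Prop :=
  (∀ J : Set S, J.Nonempty → (∀ s x : S, x ∈ J → s * x ∈ J ∧ x * s ∈ J) → J = Set.univ) ∧
  ∃ e : S, e * e = e ∧ ∀ f : S, f * f = f → e * f = f → f * e = f → f = e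

/-- An equidivisible semigroup. -/
def Equidivisible (S : Type) [Semigroup S] : Prop :=
  ∀ u v x y : S, u * v = x * y →
    ∃ t : WithOne S,
      ((x : WithOne S) = (u : WithOne S) * t ∧ t * (y : WithOne S) = (v : WithOne S)) ∨
      ((x : WithOne S) * t = (u : WithOne S) ∧ (y : WithOne S) = t * (v : WithOne S))

/-! ### The two-sided Karnofsky–Rhodes expansion -/

/-- Vertices of the two-sided Cayley graph of `T`: pairs of elements of `T^I`. -/
abbrev KRVtx (T : Type) : Type := WithOne T × WithOne T

/-- Edges of the two-sided Cayley graph: (source, label, target). -/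
abbrev KREdge (A T : Type) : Type := KRVtx T × A × KRVtx T

/-- The image in `T^I` of a letter. -/
def letterImg {A T : Type} [Semigroup T] (ψ : FreeSemigroup A →ₙ* T) (a : A) : WithOne T :=
  (ψ (FreeSemigroup.of a) : WithOne T)

/-- The image in `T^I` of a (possibly empty) word. -/
def wordImg {A T : Type} [Semigroup T] (ψ : FreeSemigroup A →ₙ* T) (w : List A) : WithOne T :=
  (w.map (letterImg ψ)).prod

/-- `e` is an edge of the two-sided Cayley graph `Γ_ψ`. -/
def IsKREdge {A T : Type} [Semigroup T] (ψ : FreeSemigroup A →ₙ* T) (e : KREdge A T) : Prop :=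
  e.1.1 * letterImg ψ e.2.1 = e.2.2.1 ∧ e.1.2 = letterImg ψ e.2.1 * e.2.2.2

/-- One step along an edge of `Γ_ψ` (used to define directed paths). -/
def KRStep {A T : Type} [Semigroup T] (ψ : FreeSemigroup A →ₙ* T) (v w : KRVtx T) : Prop :=
  ∃ a : A, v.1 * letterImg ψ a = w.1 ∧ v.2 = letterImg ψ a * w.2

/-- A transition edge of `Γ_ψ`: an edge from whose target there is no directed path
back to its source. -/
def IsTransEdge {A T : Type} [Semigroup T] (ψ : FreeSemigroup A →ₙ* T) (e : KREdge A T) : Prop :=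
  IsKREdge ψ e ∧ ¬ Relation.ReflTransGen (KRStep ψ) e.2.2 e.1

/-- The list of letters of an element of the free semigroup. -/
def letters {A : Type} (u : FreeSemigroup A) : List A := u.head :: u.tail

/-- The set of edges of the path `p_u` of `Γ_ψ` from `(I, ψ u)` to `(ψ u, I)` labeled by `u`. -/
def pathEdges {A T : Type} [Semigroup T] (ψ : FreeSemigroup A →ₙ* T) (u : FreeSemigroup A) :
    Set (KREdge A T) :=
  {e | ∃ (w₁ w₂ : List A) (a : A), letters u = w₁ ++ a :: w₂ ∧
    e = ((wordImg ψ w₁, wordImg ψ (a :: w₂)), a, (wordImg ψ (w₁ ++ [a]), wordImg ψ w₂))}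

/-- The set `T(p_u)` of transition edges of `Γ_ψ` occurring in the path `p_u`. -/
def transEdges {A T : Type} [Semigroup T] (ψ : FreeSemigroup A →ₙ* T) (u : FreeSemigroup A) :
    Set (KREdge A T) :=
  {e ∈ pathEdges ψ u | IsTransEdge ψ e}

/-- A realization of the two-sided Karnofsky–Rhodes expansion of `ψ : A⁺ → T`:
a semigroup `K = T_ψ^KR` together with the projection `ψ^KR : A⁺ → K`, which is onto and
identifies `u` and `v` exactly when `ψ u = ψ v` and `T(p_u) = T(p_v)`, and the canonical
homomorphism `π : T_ψ^KR → T` with `π ∘ ψ^KR = ψ`. -/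
structure KRExp {A T : Type} [Semigroup T] (ψ : FreeSemigroup A →ₙ* T) : Type 1 where
  K : Type
  [strK : Semigroup K]
  [finK : Finite K]
  ψKR : FreeSemigroup A →ₙ* K
  π : K →ₙ* T
  surj : Function.Surjective ⇑ψKR
  ker : ∀ u v : FreeSemigroup A, ψKR u = ψKR v ↔
    (ψ u = ψ v ∧ transEdges ψ u = transEdges ψ v)
  proj : π.comp ψKR = ψ

attribute [instance] KRExp.strK KRExp.finK

/-- The data of a two-sided Karnofsky–Rhodes expansion of a finite semigroup `T`:
a finite alphabet `A`, an onto homomorphism `ψ : A⁺ → T`, and a realization `T_ψ^KR`. -/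
structure KRData (T : Type) [Semigroup T] : Type 1 where
  A : Type
  [finA : Finite A]
  ψ : FreeSemigroup A →ₙ* T
  surjψ : Function.Surjective ⇑ψ
  E : KRExp ψ

attribute [instance] KRData.finA

/-- `V` is closed under two-sided Karnofsky–Rhodes expansion. -/
def ClosedUnderKR (V : Pseudovariety) : Prop :=
  ∀ (A T : Type) [Finite A] [Semigroup T], V.Mem T →
    ∀ (ψ : FreeSemigroup A →ₙ* T), Function.Surjective ⇑ψ →
      ∀ E : KRExp ψ, V.Mem E.K

/-! ### KR-covers -/

/-- `S` is a KR-cover of the finite semigroup `T`. -/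
def IsKRCoverOf (S : TopSgr) (T : Type) [Semigroup T] [Finite T] : Prop :=
  (∃ φ : S.carrier →ₙ* T, ContinuousDisc ⇑φ ∧ Function.Surjective ⇑φ) ∧
  ∀ φ : S.carrier →ₙ* T, ContinuousDisc ⇑φ → Function.Surjective ⇑φ →
    ∃ (D : KRData T) (φψ : S.carrier →ₙ* D.E.K),
      ContinuousDisc ⇑φψ ∧ D.E.π.comp φψ = φ

/-- `S` is a KR-cover: a KR-cover of each of its finite continuous homomorphic images. -/
def IsKRCover (S : TopSgr) : Prop :=
  ∀ (T : Type) [Semigroup T] [Finite T],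
    (∃ φ : S.carrier →ₙ* T, ContinuousDisc ⇑φ ∧ Function.Surjective ⇑φ) →
    IsKRCoverOf S T

/-- `S` is `V`-projective. -/
def IsVProjective (V : Pseudovariety) (S : TopSgr) : Prop :=
  IsProV V S ∧ ∀ (T R : TopSgr), IsProV V T → IsProV V R →
    ∀ (f : S.carrier →ₙ* T.carrier) (g : R.carrier →ₙ* T.carrier),
      Continuous ⇑f → Continuous ⇑g → Function.Surjective ⇑g →
        ∃ f' : S.carrier →ₙ* R.carrier, Continuous ⇑f' ∧ g.comp f' = f

/-! ### Strong KR-covers and letter super-cancellativity -/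

/-- `κ : A → S` is a generating mapping: its image generates a dense subsemigroup. -/
def GeneratingMap {A : Type} (S : TopSgr) (κ : A → S.carrier) : Prop :=
  Dense (Subsemigroup.closure (Set.range κ) : Set S.carrier)

/-- The homomorphism `A⁺ → T` extending `a ↦ φ (κ a)`. -/
def liftGen {A : Type} (S : TopSgr) (κ : A → S.carrier) {T : Type} [Semigroup T]
    (φ : S.carrier →ₙ* T) : FreeSemigroup A →ₙ* T :=
  FreeSemigroup.lift (fun a => φ (κ a))

/-- `S` is a strong KR-cover of the finite semigroup `T` with respect to the
generating mapping `κ`. -/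
def IsStrongKRCoverOfWrt {A : Type} (S : TopSgr) (κ : A → S.carrier)
    (T : Type) [Semigroup T] [Finite T] : Prop :=
  ∀ φ : S.carrier →ₙ* T, ContinuousDisc ⇑φ → Function.Surjective ⇑φ →
    ∃ (E : KRExp (liftGen S κ φ)) (φκ : S.carrier →ₙ* E.K),
      ContinuousDisc ⇑φκ ∧ E.π.comp φκ = φ ∧
      ∀ a : A, φκ (κ a) = E.ψKR (FreeSemigroup.of a)

/-- `S` is a strong KR-cover of the finite semigroup `T` (with respect to some
generating mapping with finite domain). -/
def IsStrongKRCoverOf (S : TopSgr) (T : Type) [Semigroup T] [Finite T] : Prop :=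
  ∃ A : Type, Finite A ∧ ∃ κ : A → S.carrier, GeneratingMap S κ ∧
    IsStrongKRCoverOfWrt S κ T

/-- `S` is a strong KR-cover: a strong KR-cover of each of its finite continuous
homomorphic images. -/
def IsStrongKRCover (S : TopSgr) : Prop :=
  ∀ (T : Type) [Semigroup T] [Finite T],
    (∃ φ : S.carrier →ₙ* T, ContinuousDisc ⇑φ ∧ Function.Surjective ⇑φ) →
    IsStrongKRCoverOf S T

/-- `S` is letter super-cancellative with respect to the subset `A` of `S`. -/
def IsLSC (S : TopSgr) (A : Set S.carrier) : Prop :=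
  ∀ a ∈ A, ∀ b ∈ A, ∀ u v : WithOne S.carrier,
    (u * (a : WithOne S.carrier) = v * (b : WithOne S.carrier) → a = b ∧ u = v) ∧
    ((a : WithOne S.carrier) * u = (b : WithOne S.carrier) * v → a = b ∧ u = v)

/-! ### `S^I` and inverse limits -/

/-- The sum topology on `S^I = S ∪ {I}`: the point `I` is isolated and `S` keeps
its topology. -/
def withOneTopology (S : Type) [TopologicalSpace S] : TopologicalSpace (WithOne S) where
  IsOpen V := IsOpen ((fun s : S => (s : WithOne S)) ⁻¹' V)
  isOpen_univ := by simp
  isOpen_inter := by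
    intro U V hU hV
    rw [Set.preimage_inter]
    exact hU.inter hV
  isOpen_sUnion := by
    intro s hs
    rw [Set.preimage_sUnion]
    exact isOpen_biUnion hs

/-- `S^I` as a topological semigroup (in fact a monoid): `S` with an isolated identity
adjoined. -/
def withOneTopSgr (S : TopSgr) : TopSgr :=
  @TopSgr.mk (WithOne S.carrier) _ (withOneTopology S.carrier)

/-- The inverse limit of a family of topological semigroups, as a subsemigroup of
the product. -/
def invLimSub {I : Type} [Preorder I] (S : I → TopSgr)
    (f : ∀ i j, j ≤ i → ((S i).carrier →ₙ* (S j).carrier)) :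
    Subsemigroup (∀ i, (S i).carrier) where
  carrier := {x | ∀ i j (h : j ≤ i), f i j h (x i) = x j}
  mul_mem' := by
    intro a b ha hb i j h
    simp only [Pi.mul_apply, map_mul, ha i j h, hb i j h]

/-- The inverse limit as a topological semigroup (with the topology induced from the
product topology). -/
def invLimTopSgr {I : Type} [Preorder I] (S : I → TopSgr)
    (f : ∀ i j, j ≤ i → ((S i).carrier →ₙ* (S j).carrier)) : TopSgr :=
  TopSgr.mk (invLimSub S f)

/-!
The free product `S * {e}` has explicit normal forms `e^a s₀ e s₁ e ⋯ e sₙ e^b`. Sending `e` to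
the image of the point gives a left inverse (into `P^I`) of the comparison map from the abstract
free product to these normal forms, so the free product embeds into them. Cutting the normal forms
off at `k` letters (a Rees quotient) yields finite semigroups `T_k` that separate all elements
with at most `k` letters. `T_1` maps onto a subsemigroup of `S⁰ × {0, 1}`, which lies in `V`
because `Sl ⊆ V`, with nilpotent fibres over idempotents; and since a product loses at most one
letter, `T_{k+2} → T_{k+1}` has a null fibre over `0` and trivial fibres elsewhere. So
`N ⓜ V = V` puts every `T_k` in `V`, and the universal property of the `V`-coproduct makes each
map from `S * {e}` to `T_k` factor through `ι`, which is therefore injective.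
-/

instance WithZero.instFinite {α : Type} [Finite α] : Finite (WithZero α) :=
  inferInstanceAs (Finite (Option α))

namespace Pseudovariety

variable (V : Pseudovariety)

theorem mem_prod {X Y : Type} [Semigroup X] [Semigroup Y] (hX : V.Mem X) (hY : V.Mem Y) :
    V.Mem (X × Y) := by
  let G : Bool → Type := fun b => cond b X Y
  let _ : ∀ b, Semigroup (G b) := fun b => by cases b <;> (dsimp [G]; infer_instance)
  have hG : V.Mem (∀ b, G b) := V.closed_prod Bool G fun b => by cases b; exacts [hY, hX]
  refine V.closed_sub _ _ ⟨fun p b => (Bool.rec p.2 p.1 b : G b),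
    fun p q => funext fun b => by cases b <;> rfl⟩ hG fun p q h => ?_
  exact Prod.ext (congrFun h true) (congrFun h false)

theorem mem_withZero_unit (hSl : ContainsSl V) : V.Mem (WithZero Unit) :=
  hSl _ mul_comm fun x => by induction x using WithZero.recZeroCoe <;> rfl

theorem mem_withZero (hSl : ContainsSl V) {S : Type} [Semigroup S] (hS : V.Mem S) :
    V.Mem (WithZero S) := by
  have := V.finite S hS
  rcases isEmpty_or_nonempty S with _ | ⟨⟨s₀⟩⟩
  · exact hSl _ (fun _ _ => Subsingleton.elim _ _) fun _ => Subsingleton.elim _ _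
  · let mask : S × WithZero Unit →ₙ* WithZero S :=
      ⟨fun p => if p.2 = 0 then 0 else p.1, by rintro ⟨a, _ | _⟩ ⟨b, _ | _⟩ <;> rfl⟩
    refine V.closed_hom _ _ mask (V.mem_prod hS (V.mem_withZero_unit hSl)) fun z => ?_
    induction z using WithZero.recZeroCoe with
    | zero => exact ⟨(s₀, 0), rfl⟩
    | coe s => exact ⟨(s, 1), rfl⟩

end Pseudovariety

theorem NMalcevFixed.mem {V : Pseudovariety} (hN : NMalcevFixed V) {X : Type} [Semigroup X]
    [Finite X] (h : NMalcevGen V X) : V.Mem X :=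
  (hN X).mpr fun _ hU => hU X h

theorem isNilpotentSgr_of_mul_mul_eq {X : Type} [Semigroup X] (z : X)
    (h : ∀ x y w : X, x * (y * w) = z) : IsNilpotentSgr X := by
  refine ⟨z, fun x => ⟨?_, ?_⟩, 2, ?_⟩
  · nth_rw 1 [← h z z z]
    rw [mul_assoc, mul_assoc, h]
  · nth_rw 1 [← h z z z]
    rw [← mul_assoc, h]
  · rintro _ ⟨x, _, ⟨y, w, -, rfl⟩, rfl⟩
    exact h x y w

theorem nMalcevGen_of_injOn_of_mul_mul_eq (V : Pseudovariety) {X Y : Type} [Semigroup X]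
    [Semigroup Y] [Finite X] (ψ : X →ₙ* Y) (hY : V.Mem Y) (o : X)
    (hinj : ∀ x y, ψ y ≠ ψ o → ψ x = ψ y → x = y)
    (hcube : ∀ x₁ x₂ x₃, ψ x₁ = ψ o → ψ x₂ = ψ o → ψ x₃ = ψ o → x₁ * (x₂ * x₃) = o) :
    NMalcevGen V X := by
  refine ⟨inferInstance, ⟨ψ.srange, V.closed_sub _ _ (MulMemClass.subtype _) hY
    Subtype.coe_injective⟩, ψ.srangeRestrict, ψ.srangeRestrict_surjective, ?_⟩
  rintro ⟨_, x₀, rfl⟩ hidem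
  have hfib : ∀ x : fiberSub ψ.srangeRestrict _ hidem, ψ x.1 = ψ x₀ := fun x =>
    congrArg Subtype.val x.2
  by_cases h₀ : ψ x₀ = ψ o
  · exact isNilpotentSgr_of_mul_mul_eq ⟨o, Subtype.ext h₀.symm⟩ fun x₁ x₂ x₃ =>
      Subtype.ext (hcube _ _ _ ((hfib x₁).trans h₀) ((hfib x₂).trans h₀) ((hfib x₃).trans h₀))
  · have hidem' : ψ x₀ * ψ x₀ = ψ x₀ := congrArg Subtype.val hidem
    have hx₀ : ∀ x : fiberSub ψ.srangeRestrict _ hidem, x.1 = x₀ := fun x =>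
      hinj _ _ h₀ (hfib x)
    refine isNilpotentSgr_of_mul_mul_eq ⟨x₀, rfl⟩ fun x₁ x₂ x₃ => Subtype.ext ?_
    rw [MulMemClass.coe_mul, MulMemClass.coe_mul, hx₀, hx₀, hx₀]
    exact hinj _ _ h₀ (by rw [map_mul, map_mul, hidem', hidem'])

theorem IsFreeProduct.hom_ext {I : Type} {S : I → Type} [∀ i, Semigroup (S i)] {P : Type}
    [Semigroup P] {e : ∀ i, S i →ₙ* P} (hP : IsFreeProduct S P e) {T : Type} [Semigroup T]
    {f g : P →ₙ* T} (h : ∀ i, f.comp (e i) = g.comp (e i)) : f = g := by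
  obtain ⟨F, -, hF⟩ := hP.universal T fun i => g.comp (e i)
  exact (hF f h).trans (hF g fun _ => rfl).symm

theorem isProV_discTopSgr {V : Pseudovariety} {X : Type} [Semigroup X] (hX : V.Mem X) :
    IsProV V (discTopSgr X) := by
  have : Finite (discTopSgr X).carrier := V.finite X hX
  have : DiscreteTopology (discTopSgr X).carrier := ⟨rfl⟩
  exact ⟨Finite.compactSpace, inferInstance, ⟨continuous_of_discreteTopology⟩,
    fun x y hxy => ⟨⟨X, hX⟩, MulHom.id X, continuous_bot, hxy⟩⟩

theorem IsCoproduct.exists_comp_eq {V : Pseudovariety} {I : Type} {F : I → TopSgr} {C : TopSgr}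
    {φ : ∀ i, (F i).carrier →ₙ* C.carrier} (hC : IsCoproduct V F C φ) {P : Type} [Semigroup P]
    {e : ∀ i, (F i).carrier →ₙ* P} (hP : IsFreeProduct (fun i => (F i).carrier) P e)
    {ι : P →ₙ* C.carrier} (hι : ∀ i, ι.comp (e i) = φ i) {X : Type} [Semigroup X]
    (hX : V.Mem X) (χ : P →ₙ* X) (hχ : ∀ i, ContinuousDisc (χ.comp (e i))) :
    ∃ Ψ : C.carrier →ₙ* X, ∀ p, Ψ (ι p) = χ p := by
  obtain ⟨Ψ, ⟨-, hΨ⟩, -⟩ := hC.universal (discTopSgr X) (isProV_discTopSgr hX) _ hχ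
  refine ⟨Ψ, DFunLike.congr_fun (hP.hom_ext (f := Ψ.comp ι) (g := χ) fun i => ?_)⟩
  rw [MulHom.comp_assoc, hι, hΨ]
  rfl

class MonotoneLength (X : Type) [Semigroup X] where
  len : X → ℕ
  len_le_len_mul_right (x y : X) : len x ≤ len (x * y)
  len_le_len_mul_left (x y : X) : len y ≤ len (x * y)

/-- The Rees quotient of `X` by the ideal of elements of length `> k`, with zero `none`. -/
abbrev Truncation (X : Type) [Semigroup X] [MonotoneLength X] (k : ℕ) : Type :=
  Option {x : X // MonotoneLength.len x ≤ k}

namespace Truncation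

open MonotoneLength

variable {X : Type} [Semigroup X] [MonotoneLength X] {k : ℕ}

def trunc (k : ℕ) (x : X) : Truncation X k :=
  if h : len x ≤ k then some ⟨x, h⟩ else none

theorem trunc_of_le {x : X} (h : len x ≤ k) : trunc k x = some ⟨x, h⟩ := dif_pos h

theorem trunc_of_not_le {x : X} (h : ¬len x ≤ k) : trunc k x = none := dif_neg h

theorem trunc_eq_none {x : X} : trunc k x = none ↔ k < len x := by
  unfold trunc
  split_ifs with h <;> simp [h]
  omega

theorem trunc_injOn {x y : X} (hx : len x ≤ k) (hy : len y ≤ k) (h : trunc k x = trunc k y) :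
    x = y := by
  rw [trunc_of_le hx, trunc_of_le hy] at h
  exact congrArg Subtype.val (Option.some.inj h)

protected def mul : Truncation X k → Truncation X k → Truncation X k
  | some x, some y => trunc k (x.1 * y.1)
  | _, _ => none

instance : Mul (Truncation X k) := ⟨Truncation.mul⟩

theorem none_mul (x : Truncation X k) : none * x = none := by
  cases x <;> rfl

theorem mul_none (x : Truncation X k) : x * none = none := by
  cases x <;> rfl

theorem some_mul_some (x y : {x : X // len x ≤ k}) : some x * some y = trunc k (x.1 * y.1) :=
  rfl

instance : Semigroup (Truncation X k) where
  mul_assoc x y z := by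
    rcases x with _ | x
    · simp only [none_mul]
    rcases y with _ | y
    · simp only [none_mul, mul_none]
    rcases z with _ | z
    · simp only [mul_none]
    rw [some_mul_some, some_mul_some]
    by_cases hxy : len (x.1 * y.1) ≤ k <;> by_cases hyz : len (y.1 * z.1) ≤ k
    · rw [trunc_of_le hxy, trunc_of_le hyz, some_mul_some, some_mul_some, mul_assoc]
    · rw [trunc_of_le hxy, trunc_of_not_le hyz, some_mul_some, mul_none, trunc_of_not_le]
      exact fun h => hyz ((len_le_len_mul_left _ _).trans (mul_assoc x.1 _ _ ▸ h))
    · rw [trunc_of_not_le hxy, trunc_of_le hyz, some_mul_some, none_mul, trunc_of_not_le]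
      exact fun h => hxy ((len_le_len_mul_right _ _).trans (mul_assoc x.1 _ _ ▸ h))
    · rw [trunc_of_not_le hxy, trunc_of_not_le hyz, none_mul, mul_none]

def truncHom (k : ℕ) : X →ₙ* Truncation X k where
  toFun := trunc k
  map_mul' x y := by
    by_cases hx : len x ≤ k
    · by_cases hy : len y ≤ k
      · rw [trunc_of_le hx, trunc_of_le hy, some_mul_some]
      · rw [trunc_of_not_le hy, mul_none,
          trunc_of_not_le fun h => hy ((len_le_len_mul_left x y).trans h)]
    · rw [trunc_of_not_le hx, none_mul,
        trunc_of_not_le fun h => hx ((len_le_len_mul_right x y).trans h)]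

theorem truncHom_apply (x : X) : truncHom k x = trunc k x := rfl

theorem some_eq_truncHom {x : X} (h : len x ≤ k) : some ⟨x, h⟩ = truncHom k x :=
  (trunc_of_le h).symm

def restrictFun (k : ℕ) : Truncation X (k + 1) → Truncation X k
  | none => none
  | some x => trunc k x.1

def restrict (k : ℕ) : Truncation X (k + 1) →ₙ* Truncation X k where
  toFun := restrictFun k
  map_mul' x y := by
    rcases x with _ | x
    · rfl
    rcases y with _ | y
    · rw [mul_none]
      exact (mul_none _).symm
    show restrictFun k (trunc (k + 1) (x.1 * y.1)) = truncHom k x.1 * truncHom k y.1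
    rw [← map_mul, truncHom_apply]
    by_cases h : len (x.1 * y.1) ≤ k + 1
    · rw [trunc_of_le h]
      rfl
    · rw [trunc_of_not_le h, trunc_of_not_le fun h' => h (h'.trans k.le_succ)]
      rfl

theorem restrict_some (x : {x : X // len x ≤ k + 1}) : restrict k (some x) = trunc k x.1 := rfl

theorem restrict_injOn {x y : Truncation X (k + 1)} (hy : restrict k y ≠ none)
    (h : restrict k x = restrict k y) : x = y := by
  rcases y with _ | y
  · exact absurd rfl hy
  rcases x with _ | x
  · exact absurd h.symm hy
  rw [restrict_some, restrict_some] at h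
  rw [restrict_some, Ne, trunc_eq_none, not_lt] at hy
  have hx : len x.1 ≤ k := not_lt.mp fun hlt => by
    rw [← trunc_eq_none, h, trunc_eq_none] at hlt
    omega
  exact congrArg some (Subtype.ext (trunc_injOn hx hy h))

theorem nMalcevGen_succ_of_mem (V : Pseudovariety)
    (hadd : ∀ x y : X, len x + len y ≤ len (x * y) + 1) [Finite (Truncation X (k + 2))]
    (hk : V.Mem (Truncation X (k + 1))) : NMalcevGen V (Truncation X (k + 2)) := by
  refine nMalcevGen_of_injOn_of_mul_mul_eq V (restrict (k + 1)) hk none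
    (fun _ _ hy h => restrict_injOn hy h) fun x₁ x₂ x₃ _ h₂ h₃ => ?_
  -- the zero fibre consists of `none` and elements of length `k + 2`, so its square is `none`
  suffices x₂ * x₃ = none by rw [this, mul_none]
  rcases x₂ with _ | x₂
  · exact none_mul _
  rcases x₃ with _ | x₃
  · exact mul_none _
  replace h₂ : trunc (k + 1) x₂.1 = none := h₂
  replace h₃ : trunc (k + 1) x₃.1 = none := h₃
  rw [trunc_eq_none] at h₂ h₃
  rw [some_mul_some, trunc_eq_none]
  have := hadd x₂.1 x₃.1
  omega

end Truncation

section MergeMul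

variable {S : Type} [Semigroup S]

/-- `[x₁, …, xₘ] ⬝ [y₁, …, yₙ] = [x₁, …, xₘ * y₁, …, yₙ]` when both lists are nonempty. -/
def mergeMul : List S → List S → List S
  | [], l' => l'
  | [x], [] => [x]
  | [x], y :: l' => x * y :: l'
  | x :: y :: l, l' => x :: mergeMul (y :: l) l'

theorem mergeMul_ne_nil (l : List S) {l' : List S} (h : l' ≠ []) : mergeMul l l' ≠ [] := by
  match l, l' with
  | [], _ => simpa [mergeMul]
  | [_], _ :: _ => simp [mergeMul]
  | _ :: _ :: _, _ => simp [mergeMul]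

theorem cons_mergeMul {l : List S} (hl : l ≠ []) (x : S) (l' : List S) :
    mergeMul (x :: l) l' = x :: mergeMul l l' := by
  match l with
  | _ :: _ => rfl

theorem mergeMul_assoc {l₂ : List S} (h₂ : l₂ ≠ []) (l₁ l₃ : List S) :
    mergeMul (mergeMul l₁ l₂) l₃ = mergeMul l₁ (mergeMul l₂ l₃) := by
  induction l₁ with
  | nil => simp [mergeMul]
  | cons x l₁ ih =>
    match l₁, l₂, l₃ with
    | [], [_], [] => simp [mergeMul]
    | [], [_], _ :: _ => simp [mergeMul, mul_assoc]
    | [], _ :: _ :: _, _ => simp [mergeMul]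
    | y :: l₁, l₂, l₃ =>
      rw [cons_mergeMul (l := y :: l₁) (by simp), cons_mergeMul (mergeMul_ne_nil _ h₂), ih,
        cons_mergeMul (l := y :: l₁) (by simp)]

theorem mergeMul_append_left {l₂ : List S} (h₂ : l₂ ≠ []) (l₁ l₃ : List S) :
    mergeMul (l₁ ++ l₂) l₃ = l₁ ++ mergeMul l₂ l₃ := by
  induction l₁ with
  | nil => rfl
  | cons x l₁ ih => rw [List.cons_append, cons_mergeMul (by simp [h₂]), ih, List.cons_append]

theorem mergeMul_append_right {l₂ : List S} (h₂ : l₂ ≠ []) (l₁ l₃ : List S) :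
    mergeMul l₁ (l₂ ++ l₃) = mergeMul l₁ l₂ ++ l₃ := by
  induction l₁ with
  | nil => rfl
  | cons x l₁ ih =>
    match l₁, l₂ with
    | [], _ :: _ => simp [mergeMul]
    | y :: l₁, _ =>
      rw [cons_mergeMul (l := y :: l₁) (by simp), cons_mergeMul (l := y :: l₁) (by simp), ih,
        List.cons_append]

theorem length_mergeMul {l l' : List S} (hl : l ≠ []) (hl' : l' ≠ []) :
    (mergeMul l l').length + 1 = l.length + l'.length := by
  induction l with
  | nil => exact absurd rfl hl
  | cons x l ih =>
    match l, l' with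
    | [], _ :: _ =>
      simp only [mergeMul, List.length_cons, List.length_nil]
      omega
    | y :: l, _ =>
      rw [cons_mergeMul (l := y :: l) (by simp), List.length_cons, ih (by simp)]
      simp only [List.length_cons]
      omega

end MergeMul

/-- Normal forms of the free product `S * {e}`: the idempotent `e` itself, or the word
`e^a s₀ e s₁ e ⋯ e sₙ e^b`, stored as `word a s₀ [s₁, …, sₙ] b`. -/
inductive FreeProdPt (S : Type) : Type
  | e : FreeProdPt S
  | word : Bool → S → List S → Bool → FreeProdPt S

namespace FreeProdPt

variable {S : Type}

def letters : FreeProdPt S → List S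
  | e => []
  | word _ s l _ => s :: l

def startsE : FreeProdPt S → Bool
  | e => true
  | word a _ _ _ => a

def endsE : FreeProdPt S → Bool
  | e => true
  | word _ _ _ b => b

def ofList (a : Bool) : List S → Bool → FreeProdPt S
  | [], _ => e
  | s :: l, b => word a s l b

theorem letters_ofList (a : Bool) (l : List S) (b : Bool) : (ofList a l b).letters = l := by
  cases l <;> rfl

theorem startsE_ofList {l : List S} (hl : l ≠ []) (a b : Bool) : (ofList a l b).startsE = a := by
  cases l
  exacts [absurd rfl hl, rfl]

theorem endsE_ofList {l : List S} (hl : l ≠ []) (a b : Bool) : (ofList a l b).endsE = b := by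
  cases l
  exacts [absurd rfl hl, rfl]

theorem letters_ne_nil_of_startsE {u : FreeProdPt S} (h : u.startsE = false) : u.letters ≠ [] := by
  cases u <;> simp_all [startsE, letters]

theorem letters_ne_nil_of_endsE {u : FreeProdPt S} (h : u.endsE = false) : u.letters ≠ [] := by
  cases u <;> simp_all [endsE, letters]

theorem ext_startsE_letters_endsE {u v : FreeProdPt S} (h₁ : u.startsE = v.startsE)
    (h₂ : u.letters = v.letters) (h₃ : u.endsE = v.endsE) : u = v := by
  cases u <;> cases v <;> simp_all [letters, startsE, endsE]

variable [Semigroup S]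

protected def mul : FreeProdPt S → FreeProdPt S → FreeProdPt S
  | e, e => e
  | e, word _ s l b => word true s l b
  | word a s l _, e => word a s l true
  | word a s l b, word a' s' l' b' =>
    if b || a' then word a s (l ++ s' :: l') b' else ofList a (mergeMul (s :: l) (s' :: l')) b'

instance : Mul (FreeProdPt S) := ⟨FreeProdPt.mul⟩

theorem e_mul_word (a : Bool) (s : S) (l : List S) (b : Bool) :
    e * word a s l b = word true s l b := rfl

theorem word_mul_e (a : Bool) (s : S) (l : List S) (b : Bool) :
    word a s l b * e = word a s l true := rfl

theorem word_mul_word (a : Bool) (s : S) (l : List S) (b a' : Bool) (s' : S) (l' : List S)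
    (b' : Bool) : word a s l b * word a' s' l' b' =
      if b || a' then word a s (l ++ s' :: l') b'
      else ofList a (mergeMul (s :: l) (s' :: l')) b' := rfl

theorem startsE_mul (u v : FreeProdPt S) : (u * v).startsE = u.startsE := by
  cases u <;> cases v <;> try rfl
  rw [word_mul_word]
  split_ifs
  exacts [rfl, startsE_ofList (mergeMul_ne_nil _ (List.cons_ne_nil _ _)) _ _]

theorem endsE_mul (u v : FreeProdPt S) : (u * v).endsE = v.endsE := by
  cases u <;> cases v <;> try rfl
  rw [word_mul_word]
  split_ifs
  exacts [rfl, endsE_ofList (mergeMul_ne_nil _ (List.cons_ne_nil _ _)) _ _]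

theorem letters_mul (u v : FreeProdPt S) : (u * v).letters =
    if u.endsE || v.startsE then u.letters ++ v.letters else mergeMul u.letters v.letters := by
  rcases u with _ | ⟨a, s, l, b⟩ <;> rcases v with _ | ⟨a', s', l', b'⟩
  · rfl
  · rfl
  · simp only [word_mul_e, letters, startsE, endsE, Bool.or_true, if_true, List.append_nil]
  · rw [word_mul_word]
    by_cases h : (b || a') = true
    · simp only [h, if_true, letters, endsE, startsE, List.cons_append]
    · rw [if_neg h, letters_ofList]
      simp only [endsE, startsE, letters, h, Bool.false_eq_true, if_false]

instance : Semigroup (FreeProdPt S) where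
  mul_assoc u v w := by
    refine ext_startsE_letters_endsE ?_ ?_ ?_
    · simp only [startsE_mul]
    · simp only [letters_mul, startsE_mul, endsE_mul]
      cases hv₁ : v.startsE <;> cases hv₂ : v.endsE <;> cases u.endsE <;> cases w.startsE <;>
        simp [mergeMul_append_left, mergeMul_append_right, mergeMul_assoc,
          letters_ne_nil_of_startsE, letters_ne_nil_of_endsE, *]
    · simp only [endsE_mul]

theorem length_letters_mul (u v : FreeProdPt S) :
    (u * v).letters.length = u.letters.length + v.letters.length ∨
      ((u * v).letters.length + 1 = u.letters.length + v.letters.length ∧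
        u.letters ≠ [] ∧ v.letters ≠ []) := by
  rw [letters_mul]
  by_cases h : (u.endsE || v.startsE) = true
  · exact Or.inl (by rw [if_pos h, List.length_append])
  · simp only [Bool.or_eq_true, not_or, Bool.not_eq_true] at h
    have hu := letters_ne_nil_of_endsE h.1
    have hv := letters_ne_nil_of_startsE h.2
    exact Or.inr ⟨by rw [if_neg (by simp [h]), length_mergeMul hu hv], hu, hv⟩

def of : S →ₙ* FreeProdPt S where
  toFun s := word false s [] false
  map_mul' _ _ := rfl

section Lift

variable {U : Type} [Semigroup U] (f : S →ₙ* U) (g : U)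

def liftLetters : List S → WithOne U
  | [] => 1
  | s :: l => f s * (l.map fun t => ((g * f t : U) : WithOne U)).prod

def liftE (c : Bool) : WithOne U := if c then g else 1

theorem liftLetters_append {l l' : List S} (hl : l ≠ []) (hl' : l' ≠ []) :
    liftLetters f g (l ++ l') = liftLetters f g l * g * liftLetters f g l' := by
  match l, l' with
  | s :: l, s' :: l' => simp [liftLetters, mul_assoc]

theorem liftLetters_mergeMul {l l' : List S} (hl : l ≠ []) (hl' : l' ≠ []) :
    liftLetters f g (mergeMul l l') = liftLetters f g l * liftLetters f g l' := by
  induction l with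
  | nil => exact absurd rfl hl
  | cons s l ih =>
    match l, l' with
    | [], s' :: l' => simp [mergeMul, liftLetters, mul_assoc]
    | t :: l, l' =>
      rw [cons_mergeMul (l := t :: l) (by simp), ← List.singleton_append,
        liftLetters_append f g (by simp) (mergeMul_ne_nil _ hl'), ih (by simp),
        ← List.singleton_append (l := t :: l), liftLetters_append f g (by simp) (by simp)]
      simp only [mul_assoc]

def liftFun (u : FreeProdPt S) : WithOne U :=
  liftE g u.startsE * liftLetters f g u.letters * liftE g u.endsE

theorem liftFun_word (a : Bool) (s : S) (l : List S) (b : Bool) :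
    liftFun f g (word a s l b) = liftE g a * liftLetters f g (s :: l) * liftE g b := rfl

theorem liftFun_ofList (a : Bool) {l : List S} (hl : l ≠ []) (b : Bool) :
    liftFun f g (ofList a l b) = liftE g a * liftLetters f g l * liftE g b := by
  rw [liftFun, startsE_ofList hl, letters_ofList, endsE_ofList hl]

variable {g}

theorem coe_mul_coe_of_idem (hg : g * g = g) : (g : WithOne U) * g = g := by
  rw [← WithOne.coe_mul, hg]

theorem coe_mul_liftE (hg : g * g = g) (c : Bool) : (g : WithOne U) * liftE g c = g := by
  cases c
  exacts [mul_one _, coe_mul_coe_of_idem hg]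

theorem liftE_mul_coe (hg : g * g = g) (c : Bool) : liftE g c * (g : WithOne U) = g := by
  cases c
  exacts [one_mul _, coe_mul_coe_of_idem hg]

theorem liftFun_e (hg : g * g = g) : liftFun f g e = g := by
  rw [liftFun, startsE, letters, endsE, liftE, if_pos rfl, liftLetters, mul_one,
    coe_mul_coe_of_idem hg]

theorem liftE_mul_liftE (hg : g * g = g) {b a : Bool} (h : (b || a) = true) :
    liftE g b * liftE g a = g := by
  cases b
  · rw [Bool.false_or] at h
    rw [h, liftE, if_neg Bool.false_ne_true, one_mul]
    rfl
  · exact coe_mul_liftE hg a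

def lift (hg : g * g = g) : FreeProdPt S →ₙ* WithOne U where
  toFun := liftFun f g
  map_mul' u v := by
    rcases u with _ | ⟨a, s, l, b⟩ <;> rcases v with _ | ⟨a', s', l', b'⟩
    · show liftFun f g e = liftFun f g e * liftFun f g e
      rw [liftFun_e f hg, coe_mul_coe_of_idem hg]
    · show liftFun f g (e * _) = liftFun f g e * liftFun f g _
      rw [e_mul_word, liftFun_word, liftFun_word, liftFun_e f hg, ← mul_assoc, ← mul_assoc,
        coe_mul_liftE hg]
      rfl
    · show liftFun f g (_ * e) = liftFun f g _ * liftFun f g e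
      rw [word_mul_e, liftFun_word, liftFun_word, liftFun_e f hg, mul_assoc (_ * _) (liftE g b),
        liftE_mul_coe hg]
      rfl
    · show liftFun f g (_ * _) = liftFun f g _ * liftFun f g _
      rw [word_mul_word, liftFun_word, liftFun_word]
      by_cases h : (b || a') = true
      · rw [if_pos h, liftFun_word, ← List.cons_append,
          liftLetters_append f g (List.cons_ne_nil _ _) (List.cons_ne_nil _ _)]
        rw [← liftE_mul_liftE hg h]
        simp only [mul_assoc]
      · rw [if_neg h, liftFun_ofList f g a (mergeMul_ne_nil _ (List.cons_ne_nil _ _)),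
          liftLetters_mergeMul f g (List.cons_ne_nil _ _) (List.cons_ne_nil _ _)]
        obtain ⟨rfl, rfl⟩ : b = false ∧ a' = false := by simpa using h
        simp only [liftE, Bool.false_eq_true, if_false, mul_one, one_mul, mul_assoc]

theorem lift_of (hg : g * g = g) (s : S) : lift f hg (of s) = f s := by
  show liftE g false * (f s * 1) * liftE g false = f s
  simp only [liftE, Bool.false_eq_true, if_false, mul_one, one_mul]

theorem lift_e (hg : g * g = g) : lift f hg e = g := liftFun_e f hg

end Lift

section Family

variable {G : Bool → Type} [∀ b, Semigroup (G b)]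

def ofFamily : ∀ b, G b →ₙ* FreeProdPt (G true)
  | true => of
  | false => ⟨fun _ => e, fun _ _ => rfl⟩

/-- `lift` of the inclusion of `G true`, sending `e` to the idempotent image of `G false`, is a
left inverse of `Φ` up to `P → P^I`. -/
theorem injective_of_isFreeProduct [Nonempty (G false)] [Subsingleton (G false)] {P : Type}
    [Semigroup P] {ι : ∀ b, G b →ₙ* P} (hP : IsFreeProduct G P ι)
    {Φ : P →ₙ* FreeProdPt (G true)} (hΦ : ∀ b, Φ.comp (ι b) = ofFamily b) :
    Function.Injective Φ := by
  obtain ⟨ε⟩ := ‹Nonempty (G false)›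
  have hg : ι false ε * ι false ε = ι false ε := by rw [← map_mul, Subsingleton.elim (ε * ε)]
  have hleft : (lift (ι true) hg).comp Φ = WithOne.coeMulHom := by
    refine hP.hom_ext fun b => MulHom.ext fun x => ?_
    rw [MulHom.comp_assoc, hΦ]
    cases b
    · exact (lift_e _ hg).trans (congrArg _ (congrArg (ι false) (Subsingleton.elim ε x)))
    · exact lift_of _ hg x
  intro p q hpq
  exact WithOne.coe_injective (by
    rw [← WithOne.coeMulHom_apply, ← WithOne.coeMulHom_apply, ← hleft, MulHom.comp_apply, hpq]
    rfl)

end Family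

open MonotoneLength Truncation

instance : MonotoneLength (FreeProdPt S) where
  len u := u.letters.length
  len_le_len_mul_right u v := by
    rcases length_letters_mul u v with h | ⟨h, -, hv⟩
    · omega
    · have := List.length_pos_of_ne_nil hv
      omega
  len_le_len_mul_left u v := by
    rcases length_letters_mul u v with h | ⟨h, hu, -⟩
    · omega
    · have := List.length_pos_of_ne_nil hu
      omega

theorem len_def (u : FreeProdPt S) : len u = u.letters.length := rfl

theorem len_add_len_le (u v : FreeProdPt S) : len u + len v ≤ len (u * v) + 1 := by
  simp only [len_def]
  rcases length_letters_mul u v with h | ⟨h, -, -⟩ <;> omega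

theorem len_mul_of_endsE_or_startsE {u v : FreeProdPt S} (h : (u.endsE || v.startsE) = true) :
    len (u * v) = len u + len v := by
  rw [len_def, letters_mul, if_pos h, List.length_append, len_def, len_def]

instance [Finite S] (k : ℕ) : Finite {u : FreeProdPt S // len u ≤ k} := by
  have : Finite {l : List S // l.length ≤ k} := (List.finite_length_le S k).to_subtype
  refine Finite.of_injective (β := Bool × {l : List S // l.length ≤ k} × Bool)
    (fun u => (u.1.startsE, ⟨u.1.letters, u.2⟩, u.1.endsE)) fun u v h => ?_
  simp only [Prod.mk.injEq, Subtype.mk.injEq] at h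
  exact Subtype.ext (ext_startsE_letters_endsE h.1 h.2.1 h.2.2)

theorem eq_e_or_eq_word_of_len_le_one {u : FreeProdPt S} (hu : len u ≤ 1) :
    u = e ∨ ∃ a s b, u = word a s [] b := by
  rcases u with _ | ⟨a, s, _ | ⟨t, l⟩, b⟩
  · exact Or.inl rfl
  · exact Or.inr ⟨a, s, b, rfl⟩
  · simp [len_def, letters] at hu

def truncOneFun : Truncation (FreeProdPt S) 1 → WithZero S × WithZero Unit
  | some ⟨word false s [] false, _⟩ => (s, 0)
  | some ⟨e, _⟩ => (0, 1)
  | _ => (0, 0)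

def truncOneHom : Truncation (FreeProdPt S) 1 →ₙ* WithZero S × WithZero Unit where
  toFun := truncOneFun
  map_mul' x y := by
    rcases x with _ | ⟨u, hu⟩ <;> rcases y with _ | ⟨v, hv⟩
    all_goals try obtain rfl | ⟨a, s, b, rfl⟩ := eq_e_or_eq_word_of_len_le_one hu
    all_goals try obtain rfl | ⟨a', s', b', rfl⟩ := eq_e_or_eq_word_of_len_le_one hv
    all_goals try cases a
    all_goals try cases b
    all_goals try cases a'
    all_goals try cases b'
    all_goals rfl

theorem truncOneHom_some_eq_zero {u : FreeProdPt S} (hu : len u ≤ 1)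
    (h : truncOneHom (some ⟨u, hu⟩) = (0, 0)) : len u = 1 ∧ (u.startsE || u.endsE) = true := by
  obtain rfl | ⟨a, s, b, rfl⟩ := eq_e_or_eq_word_of_len_le_one hu
  · exact absurd (congrArg Prod.snd h) one_ne_zero
  · cases a <;> cases b
    · exact absurd (congrArg Prod.fst h) WithZero.coe_ne_zero
    all_goals exact ⟨rfl, rfl⟩

/-- Apart from `none`, the zero fibre consists of one-letter words with an `e` at an end,
so any product of three of its elements has at least two letters. -/
theorem mul_mul_eq_none_of_truncOneHom {x₁ x₂ x₃ : Truncation (FreeProdPt S) 1}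
    (h₁ : truncOneHom x₁ = (0, 0)) (h₂ : truncOneHom x₂ = (0, 0)) (h₃ : truncOneHom x₃ = (0, 0)) :
    x₁ * (x₂ * x₃) = none := by
  rcases x₁ with _ | ⟨u₁, hu₁⟩
  · exact none_mul _
  rcases x₂ with _ | ⟨u₂, hu₂⟩
  · rw [none_mul, mul_none]
  rcases x₃ with _ | ⟨u₃, hu₃⟩
  · rw [mul_none, mul_none]
  obtain ⟨hl₁, -⟩ := truncOneHom_some_eq_zero hu₁ h₁
  obtain ⟨hl₂, hs₂⟩ := truncOneHom_some_eq_zero hu₂ h₂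
  rw [some_eq_truncHom hu₁, some_eq_truncHom hu₂, some_eq_truncHom hu₃, ← map_mul, ← map_mul,
    truncHom_apply, trunc_eq_none]
  cases h : u₂.startsE
  · rw [h, Bool.false_or] at hs₂
    have := len_mul_of_endsE_or_startsE (v := u₃) (by rw [hs₂, Bool.true_or])
    have := len_le_len_mul_left u₁ (u₂ * u₃)
    have := (truncOneHom_some_eq_zero hu₃ h₃).1
    omega
  · have := len_mul_of_endsE_or_startsE (u := u₁) (v := u₂ * u₃)
      (by rw [startsE_mul, h, Bool.or_true])
    have := len_le_len_mul_right u₂ u₃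
    omega

theorem truncOneHom_injOn {x y : Truncation (FreeProdPt S) 1} (hy : truncOneHom y ≠ (0, 0))
    (h : truncOneHom x = truncOneHom y) : x = y := by
  rcases x with _ | ⟨u, hu⟩ <;> rcases y with _ | ⟨v, hv⟩
  all_goals try obtain rfl | ⟨a, s, b, rfl⟩ := eq_e_or_eq_word_of_len_le_one hu
  all_goals try obtain rfl | ⟨a', s', b', rfl⟩ := eq_e_or_eq_word_of_len_le_one hv
  all_goals try cases a
  all_goals try cases b
  all_goals try cases a'
  all_goals try cases b'
  all_goals first
    | exact absurd rfl hy
    | rfl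
    | simp_all [truncOneHom, truncOneFun]

theorem nMalcevGen_truncation_one (V : Pseudovariety) (hSl : ContainsSl V) (hS : V.Mem S) :
    NMalcevGen V (Truncation (FreeProdPt S) 1) := by
  have := V.finite S hS
  exact nMalcevGen_of_injOn_of_mul_mul_eq V truncOneHom
    (V.mem_prod (V.mem_withZero hSl hS) (V.mem_withZero_unit hSl)) none
    (fun _ _ hy h => truncOneHom_injOn hy h) fun _ _ _ => mul_mul_eq_none_of_truncOneHom

theorem mem_truncation_succ (V : Pseudovariety) (hSl : ContainsSl V) (hN : NMalcevFixed V)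
    (hS : V.Mem S) (k : ℕ) : V.Mem (Truncation (FreeProdPt S) (k + 1)) := by
  have := V.finite S hS
  induction k with
  | zero => exact hN.mem (nMalcevGen_truncation_one V hSl hS)
  | succ k ih => exact hN.mem (nMalcevGen_succ_of_mem V len_add_len_le ih)

end FreeProdPt

/-- If `Sl ⊆ V` and `N ⓜ V = V`, then for a member `S` of `V` and a
one-element semigroup `{e}`, the natural mapping `S * {e} → S ∐^V {e}` is injective. -/
theorem injective_iota_member_and_point (V : Pseudovariety) (hSl : ContainsSl V)
    (hN : NMalcevFixed V) (F : Bool → TopSgr) (hpro : ∀ b, IsProV V (F b))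
    (hmem : V.Mem (F true).carrier)
    (h1 : Nonempty (F false).carrier) (h2 : Subsingleton (F false).carrier)
    (P : Type) [Semigroup P] (e : ∀ b, (F b).carrier →ₙ* P)
    (hP : IsFreeProduct (fun b => (F b).carrier) P e)
    (C : TopSgr) (φ : ∀ b, (F b).carrier →ₙ* C.carrier) (hC : IsCoproduct V F C φ)
    (ι : P →ₙ* C.carrier) (hι : ∀ b, ι.comp (e b) = φ b) :
    Function.Injective ⇑ι := by
  obtain ⟨Φ, hΦ, -⟩ := hP.universal _ FreeProdPt.ofFamily
  intro p q hpq
  set k := max (MonotoneLength.len (Φ p)) (MonotoneLength.len (Φ q))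
  have hcont : ∀ b, ContinuousDisc (((Truncation.truncHom (k + 1)).comp Φ).comp (e b)) := by
    intro b
    rw [MulHom.comp_assoc, hΦ]
    cases b
    · exact @continuous_of_const _ _ _ ⊥ _ fun _ _ => rfl
    · have := (hpro true).2.1
      have := V.finite _ hmem
      exact @continuous_of_discreteTopology _ _ _ _ ⊥ _
  obtain ⟨Ψ, hΨ⟩ := hC.exists_comp_eq hP hι (FreeProdPt.mem_truncation_succ V hSl hN hmem k) _
    hcont
  refine FreeProdPt.injective_of_isFreeProduct hP hΦ
    (Truncation.trunc_injOn (k := k + 1) (by omega) (by omega) ?_)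
  simpa only [hΨ, MulHom.comp_apply, Truncation.truncHom_apply] using congrArg Ψ hpq
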